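/- The Hadamard product of the series Σ_n ((6n)!/((3n)!(2n)!n!)) x^n and Σ_n 432^n (Σ_{k=0}^n (−1)^k C(−5/6,k) C(−1/6,n−k)^2) x^n is annihilated by the operator θ^4 − 144x(6θ+1)(6θ+5)(72θ^2+72θ+31) + 144·186624 x^2 (6θ+1)(6θ+5)(6θ+7)(6θ+11), given that the first factor solves θ^2 − 12x(6θ+1)(6θ+5) and the second solves θ^2 − 12x(72θ^2+72θ+31) + 186624x^2(θ+1)^2. -/

import Mathlib

open PowerSeries

/-- Multiplication by `x` on formal power series over ℚ. -/
noncomputable def Mx : Module.End ℚ (PowerSeries ℚ) :=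
  LinearMap.mulLeft ℚ (PowerSeries.X : PowerSeries ℚ)

/-- The Euler operator `θ = x·d/dx` on formal power series over ℚ. -/
noncomputable def Th : Module.End ℚ (PowerSeries ℚ) :=
  Mx ∘ₗ (PowerSeries.derivative ℚ).toLinearMap

/-- The Hadamard product `Σ A_n x^n * Σ B_n x^n = Σ A_n B_n x^n`. -/
noncomputable def hadamard (f g : PowerSeries ℚ) : PowerSeries ℚ :=
  PowerSeries.mk fun n => (PowerSeries.coeff n f) * (PowerSeries.coeff n g)

/-- The generalized binomial coefficient `C(α, k)`. -/
def gbinom (α : ℚ) (k : ℕ) : ℚ := (∏ i ∈ Finset.range k, (α - i)) / (Nat.factorial k)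

/-- The coefficients `(6n)!/((3n)!(2n)!n!)`. -/
def Acoef (n : ℕ) : ℚ :=
  (Nat.factorial (6 * n) : ℚ)
    / ((Nat.factorial (3 * n)) * (Nat.factorial (2 * n)) * (Nat.factorial n))

/-- The coefficients `432^n Σ_{k=0}^n (−1)^k C(−5/6,k) C(−1/6,n−k)²`. -/
def Bcoef (n : ℕ) : ℚ :=
  432 ^ n * ∑ k ∈ Finset.range (n + 1),
    (-1 : ℚ) ^ k * gbinom (-5/6) k * (gbinom (-1/6) (n - k)) ^ 2

/-!
On coefficients, `p₀(θ) - x p₁(θ) + x² p₂(θ)` acts by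
`f_n ↦ p₀(n) f_n - p₁(n-1) f_{n-1} + p₂(n-2) f_{n-2}`. If `p₀(n) a_n = Q(n-1) a_{n-1}` and
`p₀(n) b_n = P(n-1) b_{n-1} - c p₀(n-1) b_{n-2}`, multiplying the two relations gives
`p₀(n)² a_n b_n = (PQ)(n-1) a_{n-1} b_{n-1} - c Q(n-1) · p₀(n-1) a_{n-1} · b_{n-2}`,
and `p₀(n-1) a_{n-1} = Q(n-2) a_{n-2}` turns the last term into `-c Q(n-1) Q(n-2) a_{n-2} b_{n-2}`.
For the theorem, `p₀ = X²`, `Q = 12(6X+1)(6X+5)`, `P = 12(72X²+72X+31)` and `c = 186624`.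
-/

open Polynomial

lemma coeff_Th (f : PowerSeries ℚ) (n : ℕ) :
    coeff n (Th f) = n * coeff n f := by
  cases n with
  | zero => simp [Th, Mx]
  | succ n => simp [Th, Mx, coeff_succ_X_mul, PowerSeries.coeff_derivative, mul_comm]

lemma coeff_Th_pow (k : ℕ) (f : PowerSeries ℚ) (n : ℕ) :
    coeff n ((Th ^ k) f) = (n : ℚ) ^ k * coeff n f := by
  induction k with
  | zero => simp
  | succ k ih => rw [pow_succ', Module.End.mul_apply, coeff_Th, ih]; ring

lemma coeff_aeval_Th (p : ℚ[X]) (f : PowerSeries ℚ) (n : ℕ) :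
    coeff n (aeval Th p f) = p.eval (n : ℚ) * coeff n f := by
  induction p using Polynomial.induction_on' with
  | add p q hp hq => simp [hp, hq, add_mul]
  | monomial k c => simp [coeff_Th_pow, mul_assoc]

lemma coeff_hadamard (f g : PowerSeries ℚ) (n : ℕ) :
    coeff n (hadamard f g) = coeff n f * coeff n g := by
  simp [hadamard]

noncomputable def eulerOp (p₀ p₁ p₂ : ℚ[X]) : Module.End ℚ (PowerSeries ℚ) :=
  aeval Th p₀ - Mx * aeval Th p₁ + Mx ^ 2 * aeval Th p₂

section eulerOp

variable (p₀ p₁ p₂ : ℚ[X]) (f : PowerSeries ℚ)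

lemma eulerOp_apply : eulerOp p₀ p₁ p₂ f =
    aeval Th p₀ f - PowerSeries.X * aeval Th p₁ f + PowerSeries.X ^ 2 * aeval Th p₂ f := by
  simp [eulerOp, Mx]

lemma coeff_zero_eulerOp : coeff 0 (eulerOp p₀ p₁ p₂ f) = p₀.eval 0 * coeff 0 f := by
  rw [eulerOp_apply, map_add, map_sub, coeff_aeval_Th, PowerSeries.coeff_zero_X_mul,
    PowerSeries.coeff_X_pow_mul']
  simp

lemma coeff_one_eulerOp :
    coeff 1 (eulerOp p₀ p₁ p₂ f) = p₀.eval 1 * coeff 1 f - p₁.eval 0 * coeff 0 f := by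
  simp [eulerOp_apply, coeff_aeval_Th, PowerSeries.coeff_X_pow_mul', coeff_succ_X_mul]

lemma coeff_add_two_eulerOp (n : ℕ) :
    coeff (n + 2) (eulerOp p₀ p₁ p₂ f) = p₀.eval (n + 2 : ℚ) * coeff (n + 2) f
      - p₁.eval (n + 1 : ℚ) * coeff (n + 1) f + p₂.eval (n : ℚ) * coeff n f := by
  simp [eulerOp_apply, coeff_aeval_Th, PowerSeries.coeff_X_pow_mul', coeff_succ_X_mul]

lemma eval_mul_coeff_succ_of_eulerOp_eq_zero (h : eulerOp p₀ p₁ 0 f = 0) (n : ℕ) :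
    p₀.eval (n + 1 : ℚ) * coeff (n + 1) f = p₁.eval (n : ℚ) * coeff n f := by
  match n with
  | 0 => simpa [sub_eq_zero, h] using (coeff_one_eulerOp p₀ p₁ 0 f).symm
  | n + 1 =>
    have := coeff_add_two_eulerOp p₀ p₁ 0 f n
    push_cast
    simpa [sub_eq_zero, h, add_assoc, one_add_one_eq_two] using this.symm

end eulerOp

theorem eulerOp_hadamard_eq_zero (p₀ P Q : ℚ[X]) (c : ℚ) (a b : PowerSeries ℚ)
    (ha : eulerOp p₀ Q 0 a = 0) (hb : eulerOp p₀ P (c • taylor 1 p₀) b = 0) :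
    eulerOp (p₀ ^ 2) (P * Q) (c • (Q * taylor 1 Q)) (hadamard a b) = 0 := by
  have ra := eval_mul_coeff_succ_of_eulerOp_eq_zero p₀ Q a ha
  ext n
  match n with
  | 0 =>
    have ha₀ := coeff_zero_eulerOp p₀ Q 0 a
    simp only [ha, map_zero] at ha₀
    simp only [coeff_zero_eulerOp, coeff_hadamard, eval_pow, map_zero]
    linear_combination (-(p₀.eval 0 * coeff 0 b)) * ha₀
  | 1 =>
    have hb₁ := coeff_one_eulerOp p₀ P (c • taylor 1 p₀) b
    simp only [hb, map_zero] at hb₁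
    have ra₀ : p₀.eval 1 * coeff 1 a = Q.eval 0 * coeff 0 a := by simpa using ra 0
    simp only [coeff_one_eulerOp, coeff_hadamard, eval_pow, eval_mul, map_zero]
    linear_combination (p₀.eval 1 * coeff 1 b) * ra₀ - (Q.eval 0 * coeff 0 a) * hb₁
  | n + 2 =>
    have ra₁ : p₀.eval (n + 2 : ℚ) * coeff (n + 2) a = Q.eval (n + 1 : ℚ) * coeff (n + 1) a := by
      simpa [add_assoc, one_add_one_eq_two] using ra (n + 1)
    have hb₂ := coeff_add_two_eulerOp p₀ P (c • taylor 1 p₀) b n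
    simp only [hb, map_zero, eval_smul, taylor_eval, smul_eq_mul] at hb₂
    simp only [coeff_add_two_eulerOp, coeff_hadamard, eval_pow, eval_mul, eval_smul, taylor_eval,
      smul_eq_mul, map_zero]
    linear_combination (p₀.eval (n + 2 : ℚ) * coeff (n + 2) b) * ra₁
      - (Q.eval (n + 1 : ℚ) * coeff (n + 1) a) * hb₂ - (c * Q.eval (n + 1 : ℚ) * coeff n b) * ra n

/-- The Hadamard product `(D)*(j)`: given that `Σ Acoef_n x^n` solves
`θ² − 12x(6θ+1)(6θ+5)` and `Σ Bcoef_n x^n` solves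
`θ² − 12x(72θ²+72θ+31) + 186624x²(θ+1)²`, their Hadamard product is annihilated by
`θ⁴ − 144x(6θ+1)(6θ+5)(72θ²+72θ+31) + 144·186624x²(6θ+1)(6θ+5)(6θ+7)(6θ+11)`. -/
theorem hadamard_D_j
    (hA : ((Th ^ 2
        - Mx * ((12 : ℚ) • (((6 : ℚ) • Th + 1) * ((6 : ℚ) • Th + 5))) :
      Module.End ℚ (PowerSeries ℚ)))
      (PowerSeries.mk Acoef) = 0)
    (hB : ((Th ^ 2
        - Mx * ((12 : ℚ) • ((72 : ℚ) • Th ^ 2 + (72 : ℚ) • Th + 31))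
        + (186624 : ℚ) • (Mx ^ 2 * (Th + 1) ^ 2) :
      Module.End ℚ (PowerSeries ℚ)))
      (PowerSeries.mk Bcoef) = 0) :
    ((Th ^ 4
        - (144 : ℚ) • (Mx * (((6 : ℚ) • Th + 1) * ((6 : ℚ) • Th + 5)
            * ((72 : ℚ) • Th ^ 2 + (72 : ℚ) • Th + 31)))
        + ((144 * 186624 : ℚ)) • (Mx ^ 2 * (((6 : ℚ) • Th + 1) * ((6 : ℚ) • Th + 5)
            * ((6 : ℚ) • Th + 7) * ((6 : ℚ) • Th + 11))) :
      Module.End ℚ (PowerSeries ℚ)))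
      (hadamard (PowerSeries.mk Acoef) (PowerSeries.mk Bcoef)) = 0 := by
  set P : ℚ[X] := (12 : ℚ) • ((72 : ℚ) • Polynomial.X ^ 2 + (72 : ℚ) • Polynomial.X + 31)
  set Q : ℚ[X] := (12 : ℚ) • (((6 : ℚ) • Polynomial.X + 1) * ((6 : ℚ) • Polynomial.X + 5))
  have hPQ : P * Q = (144 : ℚ) • (((6 : ℚ) • Polynomial.X + 1) * ((6 : ℚ) • Polynomial.X + 5)
      * ((72 : ℚ) • Polynomial.X ^ 2 + (72 : ℚ) • Polynomial.X + 31)) := by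
    simp only [P, Q, Polynomial.smul_eq_C_mul, map_ofNat]
    ring
  have hQQ : (186624 : ℚ) • (Q * taylor 1 Q) = (144 * 186624 : ℚ) •
      (((6 : ℚ) • Polynomial.X + 1) * ((6 : ℚ) • Polynomial.X + 5)
        * ((6 : ℚ) • Polynomial.X + 7) * ((6 : ℚ) • Polynomial.X + 11)) := by
    simp only [Q, taylor_apply, map_one, mul_comp, add_comp, X_comp, one_comp, ofNat_comp,
      Polynomial.smul_eq_C_mul, map_ofNat, map_mul]
    ring
  have key := eulerOp_hadamard_eq_zero (Polynomial.X ^ 2) P Q 186624 _ _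
    (by simpa only [eulerOp, P, Q, map_pow, aeval_X, map_smul, map_mul, map_add, map_one,
      map_ofNat, map_zero, mul_zero, add_zero] using hA)
    (by simpa only [eulerOp, P, taylor_apply, pow_comp, add_comp, X_comp, map_pow,
      aeval_X, map_smul, map_mul, map_add, map_one, map_ofNat, mul_smul_comm] using hB)
  rw [← pow_mul, hPQ, hQQ] at key
  simpa only [eulerOp, map_pow, aeval_X, map_smul, map_mul, map_add, map_one, map_ofNat,
    mul_smul_comm] using key
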